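/- arXiv:2507.00704 — 2 statements merged into one kernel-verified Lean document; each statement's English description precedes it below -/
import Mathlib

section
/- For every real u and every γ > 1/2, the series Σ_{q≥1} H_q(u)^2 / (q! · q^γ) converges; conversely, if the series Σ_{q≥1} H_q(u)^2 / (q! · q^γ) converges for some real u then γ > 1/2. -/
/-!
Write `a_q = H_q(u)² / q!` and `K_n = ∑_{q < n} a_q`. The Christoffel–Darboux formula, with
AM–GM on its cross term `u H_{n+1} H_n / n!`, gives `K_{n+2} = (n + O(√n)) (K_{n+2} - K_n)`,
and a two-step induction comparing `K_n` with `C (√n - A)` and `c (√n + A)` gives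
`K_n ≍ √n`. Hence `a_n + a_{n+1} ≍ n^{-1/2}`: the upper bound makes the series converge for
`γ > 1/2`, and for `γ ≤ 1/2` the lower bound makes its consecutive pairs dominate the harmonic
series.
-/

noncomputable def H : ℕ → ℝ → ℝ
  | 0, _ => 1
  | 1, x => x
  | (q + 2), x => x * H (q + 1) x - (q + 1) * H q x

open Finset Filter Real
open scoped Nat

theorem Nat.le_twoStepInduction {m : ℕ} {P : ℕ → Prop} (h₀ : P m) (h₁ : P (m + 1))
    (step : ∀ n ≥ m, P n → P (n + 2)) : ∀ n ≥ m, P n := by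
  have h : ∀ n ≥ m, P n ∧ P (n + 1) :=
    Nat.le_induction ⟨h₀, h₁⟩ fun n hn ih => ⟨ih.2, step n hn ih.1⟩
  exact fun n hn => (h n hn).1

lemma sqrt_mul_sqrt_add_two_le {x : ℝ} (hx : 0 ≤ x) : √x * √(x + 2) ≤ x + 1 := by
  rw [← sqrt_mul hx, sqrt_le_left (by linarith)]
  nlinarith

lemma exists_eventually_le_mul_sqrt {S : ℕ → ℝ} {b : ℝ} (hS : 0 ≤ S) (hb : 0 ≤ b)
    (h : ∀ n : ℕ, ((n : ℝ) + 1 - b * √(n + 1)) * (S (n + 2) - S n) ≤ S (n + 2)) :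
    ∃ C ≥ 0, ∀ᶠ n in atTop, S n ≤ C * √n := by
  set A := b + 1
  obtain ⟨K, hK⟩ : ∃ K : ℕ, A < √K :=
    ⟨⌈A ^ 2⌉₊ + 1,
      (lt_sqrt (by positivity)).2 (by push_cast; linarith [Nat.le_ceil (A ^ 2)])⟩
  set C := max (S K) (S (K + 1)) / (√K - A)
  have hC : 0 ≤ C := div_nonneg (le_max_of_le_left (hS K)) (by linarith)
  have step (n : ℕ) (hn : n ≥ K) (ih : S n ≤ C * (√n - A)) :
      S (n + 2) ≤ C * (√(n + 2) - A) := by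
    set s := √n
    set r := √(n + 1)
    set t := √(n + 2)
    have hs : s ^ 2 = n := sq_sqrt (by positivity)
    have hr : r ^ 2 = n + 1 := sq_sqrt (by positivity)
    have ht : t ^ 2 = n + 2 := sq_sqrt (by positivity)
    have hKs : A < s := hK.trans_le (sqrt_le_sqrt (by exact_mod_cast hn))
    have hsr : s ≤ r := sqrt_le_sqrt (by linarith)
    have hrt : r ≤ t := sqrt_le_sqrt (by linarith)
    have hst : s * t ≤ n + 1 := sqrt_mul_sqrt_add_two_le (by positivity)
    set M := (n : ℝ) + 1 - b * r
    have hM : t * (t - A) ≤ M := by nlinarith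
    have hM1 : 1 < M := by nlinarith
    -- the growth factor `M / (M - 1)` allowed by `h` is at most `(√(n + 2) - A) / (√n - A)`
    have hgap : t - A ≤ M * (t - s) := by nlinarith
    have : S (n + 2) * (M - 1) ≤ C * (t - A) * (M - 1) := by
      nlinarith [h n, mul_le_mul_of_nonneg_left hgap hC]
    exact le_of_mul_le_mul_right this (by linarith)
  have hbound : ∀ n ≥ K, S n ≤ C * (√n - A) := by
    have hK1 : √K ≤ √(K + 1) := sqrt_le_sqrt (by linarith)
    refine Nat.le_twoStepInduction ?_ ?_ (fun n hn ih => by exact_mod_cast step n hn ih)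
    · rw [div_mul_cancel₀ _ (by linarith)]; exact le_max_left _ _
    · push_cast
      calc S (K + 1) ≤ C * (√K - A) := by
            rw [div_mul_cancel₀ _ (by linarith)]; exact le_max_right _ _
        _ ≤ C * (√(K + 1) - A) := by gcongr
  refine ⟨C, hC, (eventually_ge_atTop K).mono fun n hn => ?_⟩
  nlinarith [hbound n hn]

lemma exists_eventually_mul_sqrt_le {S : ℕ → ℝ} {b : ℝ} (hS : Monotone S) (hS₁ : 0 < S 1)
    (hb : 0 ≤ b)
    (h : ∀ n : ℕ, S (n + 2) ≤ ((n : ℝ) + 2 + b * √(n + 1)) * (S (n + 2) - S n)) :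
    ∃ c > 0, ∀ᶠ n : ℕ in atTop, c * √n ≤ S n := by
  set A := 2 * b + 2
  set c := S 1 / (√2 + A)
  have hc : 0 < c := by positivity
  have step (n : ℕ) (hn : n ≥ 1) (ih : c * (√n + A) ≤ S n) :
      c * (√(n + 2) + A) ≤ S (n + 2) := by
    set s := √n
    set r := √(n + 1)
    set t := √(n + 2)
    have hs : s ^ 2 = n := sq_sqrt (by positivity)
    have hr : r ^ 2 = n + 1 := sq_sqrt (by positivity)
    have ht : t ^ 2 = n + 2 := sq_sqrt (by positivity)
    have hs1 : 1 ≤ s := one_le_sqrt.2 (by exact_mod_cast hn)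
    have hs_le : s ≤ t := sqrt_le_sqrt (by linarith)
    have hst : s * t ≤ n + 1 := sqrt_mul_sqrt_add_two_le (by positivity)
    have hrs : r ≤ 2 * s := by nlinarith
    set N := (n : ℝ) + 2 + b * r
    have hN : N ≤ s * (t + A) := by nlinarith
    have hgap : N * (t - s) ≤ t + A := by nlinarith
    have hN1 : 1 < N := by nlinarith [mul_nonneg hb (sqrt_nonneg ((n : ℝ) + 1))]
    have : c * (t + A) * (N - 1) ≤ S (n + 2) * (N - 1) := by
      nlinarith [h n, mul_le_mul_of_nonneg_left hgap hc.le,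
        mul_le_mul_of_nonneg_left ih (by linarith : (0 : ℝ) ≤ N)]
    exact le_of_mul_le_mul_right this (by linarith)
  have hbound : ∀ n : ℕ, n ≥ 1 → c * (√n + A) ≤ S n := by
    refine Nat.le_twoStepInduction ?_ ?_ (fun n hn ih => by exact_mod_cast step n hn ih)
    · calc c * (√(1 : ℕ) + A) ≤ c * (√2 + A) := by gcongr; norm_num
        _ = S 1 := div_mul_cancel₀ _ (by positivity)
    · calc c * (√((1 + 1 : ℕ)) + A) = S 1 := by
            norm_num [c]; exact div_mul_cancel₀ _ (by positivity)
        _ ≤ S (1 + 1) := hS (by norm_num)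
  refine ⟨c, hc, (eventually_ge_atTop 1).mono fun n hn => ?_⟩
  nlinarith [hbound n hn, sqrt_nonneg 2]

lemma H_add_two (q : ℕ) (x : ℝ) : H (q + 2) x = x * H (q + 1) x - (q + 1) * H q x := rfl

noncomputable def hermiteSq (u : ℝ) (q : ℕ) : ℝ := H q u ^ 2 / q !

noncomputable def hermiteKernel (u : ℝ) (n : ℕ) : ℝ := ∑ q ∈ range n, hermiteSq u q

section Hermite

variable (u : ℝ)

lemma hermiteSq_nonneg (q : ℕ) : 0 ≤ hermiteSq u q := by
  unfold hermiteSq; positivity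

lemma hermiteKernel_monotone : Monotone (hermiteKernel u) :=
  monotone_nat_of_le_succ fun n => by
    simp only [hermiteKernel, sum_range_succ]; linarith [hermiteSq_nonneg u n]

lemma hermiteKernel_add_two_sub (n : ℕ) :
    hermiteKernel u (n + 2) - hermiteKernel u n = hermiteSq u n + hermiteSq u (n + 1) := by
  simp only [hermiteKernel, sum_range_succ]; ring

/-- The Christoffel–Darboux formula on the diagonal. -/
lemma hermiteKernel_add_two (n : ℕ) :
    hermiteKernel u (n + 2) =
      (n + 1) * (hermiteSq u n + hermiteSq u (n + 1)) + hermiteSq u (n + 1)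
        - u * (H (n + 1) u * H n u / n !) := by
  induction n with
  | zero => simp [hermiteKernel, hermiteSq, H, sum_range_succ]; ring
  | succ n ih =>
    rw [hermiteKernel, sum_range_succ, ← hermiteKernel, ih]
    simp only [hermiteSq, Nat.factorial_succ, H_add_two]
    push_cast
    field_simp
    ring

lemma sq_hermite_mul_div_factorial (n : ℕ) :
    (H (n + 1) u * H n u / n !) ^ 2 = (n + 1) * hermiteSq u n * hermiteSq u (n + 1) := by
  simp only [hermiteSq, Nat.factorial_succ]; push_cast; field_simp

lemma abs_hermite_mul_div_factorial_le (n : ℕ) :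
    |H (n + 1) u * H n u / n !| ≤ √(n + 1) * (hermiteSq u n + hermiteSq u (n + 1)) / 2 := by
  have h₀ := hermiteSq_nonneg u n
  have h₁ := hermiteSq_nonneg u (n + 1)
  refine abs_le_of_sq_le_sq ?_ (by positivity)
  rw [sq_hermite_mul_div_factorial, div_pow, mul_pow, sq_sqrt (by positivity)]
  nlinarith [sq_nonneg (hermiteSq u n - hermiteSq u (n + 1))]

lemma abs_hermiteKernel_add_two_sub_le (n : ℕ) :
    |hermiteKernel u (n + 2)
        - ((n + 1) * (hermiteSq u n + hermiteSq u (n + 1)) + hermiteSq u (n + 1))|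
      ≤ |u| / 2 * √(n + 1) * (hermiteSq u n + hermiteSq u (n + 1)) := by
  rw [hermiteKernel_add_two, sub_sub_cancel_left, abs_neg, abs_mul]
  have := abs_hermite_mul_div_factorial_le u n
  calc |u| * |H (n + 1) u * H n u / n !|
      ≤ |u| * (√(n + 1) * (hermiteSq u n + hermiteSq u (n + 1)) / 2) := by gcongr
    _ = _ := by ring

lemma exists_eventually_hermiteKernel_le :
    ∃ C ≥ 0, ∀ᶠ n in atTop, hermiteKernel u n ≤ C * √n := by
  refine exists_eventually_le_mul_sqrt (fun n => sum_nonneg fun q _ => hermiteSq_nonneg u q)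
    (by positivity : 0 ≤ |u| / 2) fun n => ?_
  have := abs_le.1 (abs_hermiteKernel_add_two_sub_le u n)
  rw [hermiteKernel_add_two_sub]
  nlinarith [hermiteSq_nonneg u (n + 1)]

lemma exists_eventually_le_hermiteKernel :
    ∃ c > 0, ∀ᶠ n : ℕ in atTop, c * √n ≤ hermiteKernel u n := by
  refine exists_eventually_mul_sqrt_le (hermiteKernel_monotone u)
    (by simp [hermiteKernel, hermiteSq, H]) (by positivity : 0 ≤ |u| / 2) fun n => ?_
  have := abs_le.1 (abs_hermiteKernel_add_two_sub_le u n)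
  rw [hermiteKernel_add_two_sub]
  nlinarith [hermiteSq_nonneg u n]

lemma exists_eventually_sqrt_mul_hermiteSq_add_le :
    ∃ C, ∀ᶠ n : ℕ in atTop, √(n + 1) * (hermiteSq u n + hermiteSq u (n + 1)) ≤ C := by
  obtain ⟨C, hC0, hC⟩ := exists_eventually_hermiteKernel_le u
  refine ⟨4 * C, ?_⟩
  filter_upwards [(tendsto_add_atTop_nat 2).eventually hC, eventually_ge_atTop ⌈u ^ 2⌉₊]
    with n hK hn
  have hD := hermiteSq_nonneg u n
  have hD' := hermiteSq_nonneg u (n + 1)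
  have hdev := (abs_le.1 (abs_hermiteKernel_add_two_sub_le u n)).1
  set r := √((n : ℝ) + 1)
  have hr : r ^ 2 = n + 1 := sq_sqrt (by positivity)
  have hr1 : 1 ≤ r := one_le_sqrt.2 (by linarith [n.cast_nonneg (α := ℝ)])
  have hur : |u| ≤ r := abs_le_of_sq_le_sq (by
    rw [hr]; linarith [(Nat.ceil_le.1 hn : u ^ 2 ≤ n)]) (by positivity)
  have ht : √((n + 2 : ℕ) : ℝ) ≤ 2 * r :=
    sqrt_le_iff.2 ⟨by positivity, by push_cast; nlinarith⟩
  have : r * (r * (hermiteSq u n + hermiteSq u (n + 1))) ≤ r * (4 * C) := by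
    nlinarith [mul_le_mul_of_nonneg_right hur (by positivity :
      0 ≤ r * (hermiteSq u n + hermiteSq u (n + 1))), mul_le_mul_of_nonneg_left ht hC0]
  exact le_of_mul_le_mul_left this (by positivity)

lemma exists_eventually_le_sqrt_mul_hermiteSq_add :
    ∃ c > 0, ∀ᶠ n : ℕ in atTop,
      c ≤ √(n + 1) * (hermiteSq u n + hermiteSq u (n + 1)) := by
  obtain ⟨c, hc, hK⟩ := exists_eventually_le_hermiteKernel u
  refine ⟨c / (2 + |u|), by positivity, ?_⟩
  filter_upwards [(tendsto_add_atTop_nat 2).eventually hK] with n hK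
  have hdev := (abs_le.1 (abs_hermiteKernel_add_two_sub_le u n)).2
  set r := √((n : ℝ) + 1)
  have hr : r ^ 2 = n + 1 := sq_sqrt (by positivity)
  have hr1 : 1 ≤ r := one_le_sqrt.2 (by linarith [n.cast_nonneg (α := ℝ)])
  have ht : r ≤ √((n + 2 : ℕ) : ℝ) := sqrt_le_sqrt (by push_cast; linarith)
  have hD := add_nonneg (hermiteSq_nonneg u n) (hermiteSq_nonneg u (n + 1))
  have : r * c ≤ r * (r * (hermiteSq u n + hermiteSq u (n + 1)) * (2 + |u|)) := by
    nlinarith [mul_le_mul_of_nonneg_left ht hc.le, hermiteSq_nonneg u n,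
      mul_nonneg hD (by nlinarith : 0 ≤ r ^ 2 - 1),
      mul_nonneg (mul_nonneg (abs_nonneg u) hD) (by nlinarith : 0 ≤ r ^ 2 - r / 2)]
  rw [div_le_iff₀ (by positivity)]
  exact le_of_mul_le_mul_left this (by positivity)

lemma summable_hermiteSq_div_rpow {γ : ℝ} (hγ : 1 / 2 < γ) :
    Summable fun n : ℕ => hermiteSq u n / (n : ℝ) ^ γ := by
  obtain ⟨C, hC⟩ := exists_eventually_sqrt_mul_hermiteSq_add_le u
  refine Summable.of_norm_bounded_eventually_nat
    ((summable_one_div_nat_rpow.2 (by linarith : 1 < 1 / 2 + γ)).mul_left C) ?_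
  filter_upwards [hC, eventually_ge_atTop 1] with n hn hn1
  have hn0 : (0 : ℝ) < n := by exact_mod_cast hn1
  have hbound : √n * hermiteSq u n ≤ C :=
    calc √n * hermiteSq u n ≤ √(n + 1) * (hermiteSq u n + hermiteSq u (n + 1)) :=
          mul_le_mul (sqrt_le_sqrt (by linarith))
            (le_add_of_nonneg_right (hermiteSq_nonneg u _)) (hermiteSq_nonneg u n) (sqrt_nonneg _)
      _ ≤ C := hn
  rw [norm_of_nonneg (div_nonneg (hermiteSq_nonneg u n) (by positivity)), rpow_add hn0,
    ← sqrt_eq_rpow, mul_one_div, div_le_div_iff₀ (by positivity) (by positivity)]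
  nlinarith [rpow_pos_of_pos hn0 γ]

lemma not_summable_hermiteSq_div_sqrt : ¬ Summable fun n : ℕ => hermiteSq u n / √n := by
  intro hs
  obtain ⟨c, hc, hcD⟩ := exists_eventually_le_sqrt_mul_hermiteSq_add u
  have hpairs := (hs.add ((summable_nat_add_iff 1).2 hs)).mul_left c⁻¹
  refine not_summable_one_div_natCast ((summable_nat_add_iff 1).1
    (hpairs.of_norm_bounded_eventually_nat ?_))
  filter_upwards [hcD, eventually_ge_atTop 1] with n hn hn1
  have hn0 : (0 : ℝ) < n := by exact_mod_cast hn1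
  set r := √((n : ℝ) + 1)
  have hr : 0 < r := by positivity
  rw [norm_of_nonneg (by positivity)]
  push_cast
  calc 1 / ((n : ℝ) + 1) = c⁻¹ * (c / r / r) := by
        rw [div_div, mul_self_sqrt (by positivity)]; field_simp
    _ ≤ c⁻¹ * ((hermiteSq u n + hermiteSq u (n + 1)) / r) := by
        gcongr; rwa [div_le_iff₀ hr, mul_comm]
    _ ≤ c⁻¹ * (hermiteSq u n / √n + hermiteSq u (n + 1) / r) := by
        rw [add_div]; gcongr
        · exact hermiteSq_nonneg u n
        · exact sqrt_le_sqrt (by linarith)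

lemma not_summable_hermiteSq_div_rpow {γ : ℝ} (hγ : γ ≤ 1 / 2) :
    ¬ Summable fun n : ℕ => hermiteSq u n / (n : ℝ) ^ γ := by
  refine fun hs => not_summable_hermiteSq_div_sqrt u (hs.of_nonneg_of_le
    (fun n => div_nonneg (hermiteSq_nonneg u n) (sqrt_nonneg _)) fun n => ?_)
  rcases n.eq_zero_or_pos with rfl | hn
  · simpa using div_nonneg (hermiteSq_nonneg u 0) (zero_rpow_nonneg γ)
  · rw [sqrt_eq_rpow]
    exact div_le_div_of_nonneg_left (hermiteSq_nonneg u n) (by positivity)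
      (rpow_le_rpow_of_exponent_le (by exact_mod_cast hn) hγ)

end Hermite

/-- For every real `u`, the series `∑_{q ≥ 1} H_q(u)^2 / (q! q^γ)` converges
if and only if `γ > 1/2`. -/
theorem hermite_weighted_series_summable_iff (u γ : ℝ) :
    Summable (fun q : ℕ =>
      H (q + 1) u ^ 2 / ((Nat.factorial (q + 1) : ℝ) * ((q : ℝ) + 1) ^ γ))
      ↔ γ > 1 / 2 := by
  have hshift :
      (fun q : ℕ => H (q + 1) u ^ 2 / ((Nat.factorial (q + 1) : ℝ) * ((q : ℝ) + 1) ^ γ))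
        = fun q => hermiteSq u (q + 1) / ((q + 1 : ℕ) : ℝ) ^ γ := by
    ext q; rw [hermiteSq, div_div]; push_cast; rfl
  rw [hshift, summable_nat_add_iff 1 (f := fun n : ℕ => hermiteSq u n / (n : ℝ) ^ γ)]
  exact ⟨fun hs => lt_of_not_ge fun hγ => not_summable_hermiteSq_div_rpow u hγ hs,
    summable_hermiteSq_div_rpow u⟩
end

section
/- Let κ: [-1,1] → ℝ be continuous with κ(1) = 1, |κ(u)| < 1 for u ≠ 1, and 1 - κ(cos θ) ≥ C_1 |θ|^α for |θ| ≤ ε (positive constants C_1, α, ε). Then there exists c > 0 such that ∫_{S^d × S^d} |κ(⟨x,y⟩)|^N dμ(x) dμ(y) ≤ c · N^{-d/α} for all positive integers N, where μ is the volume measure on the d-sphere S^d. -/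
/-!
Near the diagonal `1 - κ (cos θ) ≥ C₁ θ ^ α`, and away from it `|κ|` stays below some `q < 1`;
together with `‖x - y‖ ≤ ∠(x, y)` this gives `|κ ⟪x, y⟫| ≤ exp (-c ‖x - y‖ ^ α)` on the sphere,
hence `|κ ⟪x, y⟫| ^ N ≤ exp (-c (‖x - y‖ / ρ) ^ α)` with `ρ = N ^ (-1 / α)`. Caps of chordal
radius `r` have measure `O(r ^ d)`, so cutting the pairs `(x, y)` into the shells
`k ρ ≤ ‖x - y‖ < (k + 1) ρ` bounds the integral by a constant times
`ρ ^ d ∑ₖ (k + 1) ^ d exp (-c k ^ α) = O(N ^ (-d / α))`.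
-/

open MeasureTheory Metric Set Filter Real InnerProductGeometry Module
open scoped ENNReal Topology Pointwise

section Covariance

variable {κ : ℝ → ℝ}

theorem exists_lt_one_forall_abs_comp_cos_le (hg : Continuous fun θ ↦ κ (cos θ))
    (hlt : ∀ t ∈ Icc (-1 : ℝ) 1, t ≠ 1 → |κ t| < 1) {a : ℝ} (ha₀ : 0 < a) (haπ : a ≤ π) :
    ∃ q < 1, ∀ θ ∈ Icc a π, |κ (cos θ)| ≤ q := by
  obtain ⟨θ₀, hθ₀, hmax⟩ :=
    isCompact_Icc.exists_isMaxOn (nonempty_Icc.2 haπ) hg.abs.continuousOn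
  refine ⟨_, hlt _ ⟨neg_one_le_cos _, cos_le_one _⟩ (ne_of_lt ?_), fun θ hθ ↦ hmax hθ⟩
  simpa using cos_lt_cos_of_nonneg_of_le_pi le_rfl hθ₀.2 (ha₀.trans_le hθ₀.1)

theorem exists_abs_comp_cos_le_exp_neg_mul_rpow (hcont : ContinuousOn κ (Icc (-1) 1))
    (h1 : κ 1 = 1) (hlt : ∀ t ∈ Icc (-1 : ℝ) 1, t ≠ 1 → |κ t| < 1) {C₁ α ε : ℝ} (hC₁ : 0 < C₁)
    (hα : 0 < α) (hε : 0 < ε) (hlow : ∀ θ : ℝ, |θ| ≤ ε → C₁ * |θ| ^ α ≤ 1 - κ (cos θ)) :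
    ∃ c > 0, ∀ θ ∈ Icc 0 π, |κ (cos θ)| ≤ exp (-(c * θ ^ α)) := by
  have hg : Continuous fun θ ↦ κ (cos θ) :=
    hcont.comp_continuous continuous_cos fun θ ↦ ⟨neg_one_le_cos θ, cos_le_one θ⟩
  obtain ⟨η, hη, hpos⟩ : ∃ η > 0, ∀ θ, dist θ 0 < η → 0 < κ (cos θ) :=
    Metric.eventually_nhds_iff.1 <| hg.tendsto 0 |>.eventually_const_lt (by simp [h1])
  set a := min ε (min (η / 2) π)
  have ha₀ : 0 < a := lt_min hε (lt_min (half_pos hη) pi_pos)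
  have haη : a < η := (min_le_right _ _).trans_lt <| (min_le_left _ _).trans_lt (half_lt_self hη)
  obtain ⟨q, hq, hfar⟩ :=
    exists_lt_one_forall_abs_comp_cos_le hg hlt ha₀ ((min_le_right _ _).trans (min_le_right _ _))
  have hπα : 0 < π ^ α := rpow_pos_of_pos pi_pos α
  refine ⟨min C₁ ((1 - q) / π ^ α), lt_min hC₁ (div_pos (by linarith) hπα), fun θ hθ ↦ ?_⟩
  have hθα : 0 ≤ θ ^ α := rpow_nonneg hθ.1 α
  rcases le_or_gt θ a with hθa | hθa
  · have hnear := hlow θ ((abs_of_nonneg hθ.1).trans_le (hθa.trans (min_le_left _ _)))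
    rw [abs_of_nonneg hθ.1] at hnear
    have hκ₀ : 0 < κ (cos θ) :=
      hpos θ <| by rw [Real.dist_eq, sub_zero, abs_of_nonneg hθ.1]; linarith
    calc |κ (cos θ)| = κ (cos θ) := abs_of_pos hκ₀
      _ ≤ exp (-(C₁ * θ ^ α)) := by linarith [add_one_le_exp (-(C₁ * θ ^ α))]
      _ ≤ exp (-(min C₁ ((1 - q) / π ^ α) * θ ^ α)) := by gcongr; exact min_le_left _ _
  · calc |κ (cos θ)| ≤ q := hfar θ ⟨hθa.le, hθ.2⟩
      _ ≤ exp (-((1 - q) / π ^ α * π ^ α)) := by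
        rw [div_mul_cancel₀ _ hπα.ne']
        linarith [add_one_le_exp (-(1 - q))]
      _ ≤ exp (-(min C₁ ((1 - q) / π ^ α) * θ ^ α)) := by
        gcongr
        · exact min_le_right _ _
        · exact hθ.1
        · exact hθ.2

theorem norm_sub_le_angle_of_norm_eq_one {V : Type*} [NormedAddCommGroup V]
    [InnerProductSpace ℝ V] {x y : V} (hx : ‖x‖ = 1) (hy : ‖y‖ = 1) : ‖x - y‖ ≤ angle x y := by
  refine (pow_le_pow_iff_left₀ (norm_nonneg _) (angle_nonneg x y) two_ne_zero).1 ?_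
  rw [norm_sub_sq_real, hx, hy, inner_eq_cos_angle_of_norm_eq_one hx hy]
  linarith [one_sub_sq_div_two_le_cos (x := angle x y)]

theorem exists_abs_inner_le_exp_neg_mul_rpow {V : Type*} [NormedAddCommGroup V]
    [InnerProductSpace ℝ V] (hcont : ContinuousOn κ (Icc (-1) 1)) (h1 : κ 1 = 1)
    (hlt : ∀ t ∈ Icc (-1 : ℝ) 1, t ≠ 1 → |κ t| < 1) {C₁ α ε : ℝ} (hC₁ : 0 < C₁) (hα : 0 < α)
    (hε : 0 < ε) (hlow : ∀ θ : ℝ, |θ| ≤ ε → C₁ * |θ| ^ α ≤ 1 - κ (cos θ)) :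
    ∃ c > 0, ∀ x y : V, ‖x‖ = 1 → ‖y‖ = 1 → |κ (inner ℝ x y)| ≤ exp (-(c * ‖x - y‖ ^ α)) := by
  obtain ⟨c, hc, hκ⟩ := exists_abs_comp_cos_le_exp_neg_mul_rpow hcont h1 hlt hC₁ hα hε hlow
  refine ⟨c, hc, fun x y hx hy ↦ ?_⟩
  rw [inner_eq_cos_angle_of_norm_eq_one hx hy]
  refine (hκ _ ⟨angle_nonneg x y, angle_le_pi x y⟩).trans ?_
  gcongr
  exact norm_sub_le_angle_of_norm_eq_one hx hy

end Covariance

section Cap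

variable {E : Type*} [NormedAddCommGroup E] [NormedSpace ℝ E]

theorem Ioo_smul_subset_smul_union_closedBall {S : Set E} (hS : S ⊆ sphere 0 1) {x : E} {r : ℝ}
    (hSx : S ⊆ closedBall x r) :
    Ioo (0 : ℝ) 1 • S ⊆ (1 - r) • (Ioo (0 : ℝ) 1 • S) ∪ closedBall x (2 * r) := by
  rintro _ ⟨t, ht, y, hy, rfl⟩
  rcases lt_or_ge t (1 - r) with htr | htr
  · have hr : 0 < 1 - r := ht.1.trans htr
    refine Or.inl ⟨(t / (1 - r)) • y, smul_mem_smul ⟨div_pos ht.1 hr, ?_⟩ hy, ?_⟩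
    · exact (div_lt_one hr).2 htr
    · simp only [smul_smul, mul_div_cancel₀ _ hr.ne']
  · refine Or.inr <| mem_closedBall_iff_norm.2 ?_
    have hty : ‖t • y - y‖ = 1 - t := by
      rw [show t • y - y = (t - 1) • y by rw [sub_smul, one_smul], norm_smul,
        mem_sphere_zero_iff_norm.1 (hS hy), mul_one, Real.norm_eq_abs, abs_sub_comm,
        abs_of_nonneg (by linarith [ht.2])]
    calc ‖t • y - x‖ ≤ ‖t • y - y‖ + ‖y - x‖ := norm_sub_le_norm_sub_add_norm_sub _ _ _
      _ ≤ 2 * r := by linarith [mem_closedBall_iff_norm.1 (hSx hy)]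

variable [MeasurableSpace E] [BorelSpace E] [FiniteDimensional ℝ E] (μ : Measure E)
  [μ.IsAddHaarMeasure] {n : ℕ}

/-- Writing `V` for the measure of the cone, the covering above gives
`V ≤ (1 - r) ^ (n + 1) V + (2 r) ^ (n + 1) μ (ball 0 1)`, and `1 - (1 - r) ^ (n + 1) ≥ r`. -/
theorem addHaar_Ioo_smul_le (hn : finrank ℝ E = n + 1) {S : Set E} (hS : S ⊆ sphere 0 1)
    {x : E} {r : ℝ} (hSx : S ⊆ closedBall x r) (hr₀ : 0 < r) (hr₁ : r ≤ 1) :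
    μ (Ioo (0 : ℝ) 1 • S) ≤ ENNReal.ofReal (2 ^ (n + 1) * r ^ n) * μ (ball 0 1) := by
  have hcone : Ioo (0 : ℝ) 1 • S ⊆ closedBall 0 1 := by
    rintro _ ⟨t, ht, y, hy, rfl⟩
    rw [mem_closedBall_zero_iff, norm_smul, mem_sphere_zero_iff_norm.1 (hS hy), mul_one,
      Real.norm_eq_abs, abs_of_pos ht.1]
    exact ht.2.le
  have hV := (measure_mono hcone).trans_lt (measure_closedBall_lt_top (μ := μ)) |>.ne
  have hB : μ (ball 0 1) ≠ ⊤ := measure_ball_lt_top.ne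
  have key : μ (Ioo (0 : ℝ) 1 • S) ≤
      ENNReal.ofReal ((1 - r) ^ (n + 1)) * μ (Ioo (0 : ℝ) 1 • S) +
        ENNReal.ofReal ((2 * r) ^ (n + 1)) * μ (ball 0 1) := by
    calc _ ≤ _ := measure_mono (Ioo_smul_subset_smul_union_closedBall hS hSx)
      _ ≤ _ := measure_union_le _ _
      _ = _ := by
        rw [μ.addHaar_smul_of_nonneg (by linarith), μ.addHaar_closedBall _ (by positivity), hn]
  rw [← ENNReal.ofReal_toReal hV, ← ENNReal.ofReal_toReal hB,
    ← ENNReal.ofReal_mul (by positivity), ← ENNReal.ofReal_mul (by positivity),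
    ← ENNReal.ofReal_add (by positivity) (by positivity),
    ENNReal.ofReal_le_ofReal_iff (by positivity)] at key
  rw [← ENNReal.ofReal_toReal hV, ← ENNReal.ofReal_toReal hB,
    ← ENNReal.ofReal_mul (by positivity)]
  refine ENNReal.ofReal_le_ofReal <| le_of_mul_le_mul_left ?_ hr₀
  have hpow : (1 - r) ^ (n + 1) ≤ 1 - r :=
    pow_le_of_le_one (by linarith) (by linarith) n.succ_ne_zero
  calc r * (μ (Ioo (0 : ℝ) 1 • S)).toReal
      ≤ (1 - (1 - r) ^ (n + 1)) * (μ (Ioo (0 : ℝ) 1 • S)).toReal := by gcongr; linarith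
    _ ≤ (2 * r) ^ (n + 1) * (μ (ball 0 1)).toReal := by linarith
    _ = r * (2 ^ (n + 1) * r ^ n * (μ (ball 0 1)).toReal) := by ring

theorem exists_toSphere_closedBall_le (hn : finrank ℝ E = n + 1) :
    ∃ C > 0, ∀ (x : sphere (0 : E) 1) (r : ℝ), 0 < r →
      μ.toSphere (closedBall x r) ≤ ENNReal.ofReal (C * r ^ n) := by
  have : Nontrivial E := finrank_pos_iff.1 (by rw [hn]; exact n.succ_pos)
  have hB₀ : 0 < μ.real (ball 0 1) :=
    ENNReal.toReal_pos (measure_ball_pos μ 0 one_pos).ne' measure_ball_lt_top.ne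
  have hB : μ (ball 0 1) = ENNReal.ofReal (μ.real (ball 0 1)) :=
    (ofReal_measureReal measure_ball_lt_top.ne).symm
  refine ⟨(n + 1) * 2 ^ (n + 1) * μ.real (ball 0 1), by positivity, fun x r hr ↦ ?_⟩
  rcases le_or_gt r 1 with hr₁ | hr₁
  · have hcap : (↑) '' closedBall x r ⊆ closedBall (x : E) r := by
      rintro _ ⟨y, hy, rfl⟩
      exact hy
    rw [μ.toSphere_apply' measurableSet_closedBall, hn]
    calc ((n + 1 : ℕ) : ℝ≥0∞) * μ (Ioo (0 : ℝ) 1 • ((↑) '' closedBall x r))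
        ≤ (n + 1 : ℕ) * (ENNReal.ofReal (2 ^ (n + 1) * r ^ n) * μ (ball 0 1)) :=
          mul_le_mul_of_nonneg_left
            (addHaar_Ioo_smul_le μ hn (Subtype.coe_image_subset _ _) hcap hr hr₁) zero_le
      _ = ENNReal.ofReal ((n + 1) * 2 ^ (n + 1) * μ.real (ball 0 1) * r ^ n) := by
          rw [hB, ← ENNReal.ofReal_mul (by positivity), ← ENNReal.ofReal_natCast,
            ← ENNReal.ofReal_mul (by positivity)]
          push_cast
          ring_nf
  · have hr : (1 : ℝ) ≤ 2 ^ (n + 1) * r ^ n :=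
      one_le_mul_of_one_le_of_one_le (one_le_pow₀ one_le_two) (one_le_pow₀ hr₁.le)
    calc μ.toSphere (closedBall x r) ≤ μ.toSphere univ := measure_mono (subset_univ _)
      _ = ENNReal.ofReal ((n + 1) * μ.real (ball 0 1)) := by
          rw [μ.toSphere_apply_univ, hn, hB, ← ENNReal.ofReal_natCast,
            ← ENNReal.ofReal_mul (by positivity)]
          push_cast; rfl
      _ ≤ _ := ENNReal.ofReal_le_ofReal <| by
          nlinarith [show 0 ≤ (n + 1) * μ.real (ball 0 1) by positivity]

end Cap

theorem summable_exp_neg_mul_rpow_mul_pow {c α : ℝ} (hc : 0 < c) (hα : 0 < α) (d : ℕ) :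
    Summable fun k : ℕ ↦ exp (-(c * (k : ℝ) ^ α)) * ((k : ℝ) + 1) ^ d := by
  have hlim : Tendsto (fun k : ℕ ↦ (k : ℝ) ^ (d + 2) * exp (-(c * (k : ℝ) ^ α))) atTop (𝓝 0) := by
    refine ((tendsto_rpow_mul_exp_neg_mul_atTop_nhds_zero ((d + 2) / α) c hc).comp
      ((tendsto_rpow_atTop hα).comp tendsto_natCast_atTop_atTop)).congr fun k ↦ ?_
    simp only [Function.comp, ← rpow_mul k.cast_nonneg, neg_mul]
    rw [mul_div_cancel₀ _ hα.ne', ← rpow_natCast]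
    push_cast; rfl
  refine Summable.of_norm_bounded_eventually_nat
    ((summable_one_div_nat_pow.2 one_lt_two).mul_left (2 ^ d)) ?_
  filter_upwards [hlim.eventually_le_const zero_lt_one, eventually_ge_atTop 1] with k hk hk1
  have hk1 : (1 : ℝ) ≤ k := by exact_mod_cast hk1
  rw [Real.norm_of_nonneg (by positivity), mul_one_div, le_div_iff₀ (by positivity)]
  calc exp (-(c * (k : ℝ) ^ α)) * ((k : ℝ) + 1) ^ d * (k : ℝ) ^ 2
      ≤ exp (-(c * (k : ℝ) ^ α)) * (2 * k) ^ d * (k : ℝ) ^ 2 := by gcongr; linarith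
    _ = 2 ^ d * ((k : ℝ) ^ (d + 2) * exp (-(c * (k : ℝ) ^ α))) := by ring
    _ ≤ 2 ^ d := mul_le_of_le_one_right (by positivity) hk

theorem exp_neg_mul_rpow_pow {c α s : ℝ} (hα : α ≠ 0) (hs : 0 ≤ s) {N : ℕ} (hN : 0 < N) :
    exp (-(c * s ^ α)) ^ N = exp (-(c * (s / (N : ℝ) ^ (-1 / α)) ^ α)) := by
  have hN₀ : (0 : ℝ) < N := by exact_mod_cast hN
  rw [← exp_nat_mul, div_rpow hs (rpow_nonneg hN₀.le _), ← rpow_mul hN₀.le,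
    div_mul_cancel₀ _ hα, rpow_neg_one, div_inv_eq_mul]
  ring_nf

theorem ofReal_le_tsum_indicator_Iio {φ : ℝ → ℝ} (hφ : AntitoneOn φ (Ici 0)) {u : ℝ}
    (hu : 0 ≤ u) :
    ENNReal.ofReal (φ u) ≤
      ∑' k : ℕ, (Iio ((k : ℝ) + 1)).indicator (fun _ ↦ ENNReal.ofReal (φ k)) u := by
  refine le_trans ?_ (ENNReal.le_tsum ⌊u⌋₊)
  rw [indicator_of_mem (show u ∈ Iio _ from Nat.lt_floor_add_one u)]
  exact ENNReal.ofReal_le_ofReal <| hφ (mem_Ici.2 (Nat.cast_nonneg _)) hu (Nat.floor_le hu)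

theorem lintegral_prod_comp_dist_le {X : Type*} [PseudoMetricSpace X] [MeasurableSpace X]
    [OpensMeasurableSpace X] [SecondCountableTopology X] (σ : Measure X) [IsFiniteMeasure σ]
    {C : ℝ} (hC : 0 ≤ C) {d : ℕ}
    (hball : ∀ x (r : ℝ), 0 < r → σ (closedBall x r) ≤ ENNReal.ofReal (C * r ^ d))
    {φ : ℝ → ℝ} (hφ : AntitoneOn φ (Ici 0)) (hφ₀ : ∀ u, 0 ≤ φ u)
    (hsum : Summable fun k : ℕ ↦ φ k * ((k : ℝ) + 1) ^ d) {ρ : ℝ} (hρ : 0 < ρ) :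
    ∫⁻ p : X × X, ENNReal.ofReal (φ (dist p.1 p.2 / ρ)) ∂σ.prod σ ≤
      ENNReal.ofReal (σ.real univ * C * (∑' k : ℕ, φ k * ((k : ℝ) + 1) ^ d) * ρ ^ d) := by
  set T : ℕ → Set (X × X) := fun k ↦ (fun p ↦ dist p.1 p.2 / ρ) ⁻¹' Iio ((k : ℝ) + 1)
  have hT (k : ℕ) : MeasurableSet (T k) :=
    (isOpen_lt (continuous_dist.div_const ρ) continuous_const).measurableSet
  have hTk (k : ℕ) :
      σ.prod σ (T k) ≤ ENNReal.ofReal (σ.real univ * (C * (((k : ℝ) + 1) * ρ) ^ d)) := by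
    rw [Measure.prod_apply (hT k), ENNReal.ofReal_mul measureReal_nonneg, ofReal_measureReal,
      mul_comm, ← lintegral_const]
    refine lintegral_mono fun x ↦ (measure_mono fun y hy ↦ ?_).trans (hball x _ (by positivity))
    rw [mem_closedBall, dist_comm]
    exact ((div_lt_iff₀ hρ).1 hy).le
  calc ∫⁻ p, ENNReal.ofReal (φ (dist p.1 p.2 / ρ)) ∂σ.prod σ
      ≤ ∫⁻ p, ∑' k : ℕ, (T k).indicator (fun _ ↦ ENNReal.ofReal (φ k)) p ∂σ.prod σ :=
        lintegral_mono fun p ↦ ofReal_le_tsum_indicator_Iio hφ (by positivity)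
    _ = ∑' k : ℕ, ENNReal.ofReal (φ k) * σ.prod σ (T k) := by
        rw [lintegral_tsum fun k ↦ (measurable_const.indicator (hT k)).aemeasurable]
        simp only [lintegral_indicator_const (hT _)]
    _ ≤ ∑' k : ℕ, ENNReal.ofReal (σ.real univ * C * ρ ^ d * (φ k * ((k : ℝ) + 1) ^ d)) := by
        refine ENNReal.tsum_le_tsum fun k ↦ (mul_le_mul_of_nonneg_left (hTk k) zero_le).trans ?_
        rw [← ENNReal.ofReal_mul (hφ₀ k), mul_pow]
        exact le_of_eq (congrArg _ (by ring))
    _ = _ := by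
        rw [← ENNReal.ofReal_tsum_of_nonneg (fun k ↦ by have := hφ₀ k; positivity)
          (hsum.mul_left _), tsum_mul_left]
        ring_nf

theorem sphere_covariance_moment_upper_bound_general
    {d : ℕ} (κ : ℝ → ℝ)
    (hcont : ContinuousOn κ (Set.Icc (-1 : ℝ) 1)) (h1 : κ 1 = 1)
    (hlt : ∀ t ∈ Set.Icc (-1 : ℝ) 1, t ≠ 1 → |κ t| < 1)
    (C₁ α ε : ℝ) (hC₁ : 0 < C₁) (hα : 0 < α) (hε : 0 < ε)
    (hlow : ∀ θ : ℝ, |θ| ≤ ε → C₁ * |θ| ^ α ≤ 1 - κ (Real.cos θ)) :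
    ∃ c : ℝ, 0 < c ∧ ∀ N : ℕ, 1 ≤ N →
      ∫⁻ p : (Metric.sphere (0 : EuclideanSpace ℝ (Fin (d + 1))) 1) ×
              (Metric.sphere (0 : EuclideanSpace ℝ (Fin (d + 1))) 1),
          ENNReal.ofReal
            (|κ (inner ℝ (p.1 : EuclideanSpace ℝ (Fin (d + 1)))
                (p.2 : EuclideanSpace ℝ (Fin (d + 1))))| ^ N)
        ∂((volume : Measure (EuclideanSpace ℝ (Fin (d + 1)))).toSphere.prod
            (volume : Measure (EuclideanSpace ℝ (Fin (d + 1)))).toSphere)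
      ≤ ENNReal.ofReal (c * (N : ℝ) ^ (-(d : ℝ) / α)) := by
  set σ := (volume : Measure (EuclideanSpace ℝ (Fin (d + 1)))).toSphere
  have : NeZero σ := ⟨Measure.toSphere_ne_zero _⟩
  obtain ⟨c, hc, hκ⟩ := exists_abs_inner_le_exp_neg_mul_rpow
    (V := EuclideanSpace ℝ (Fin (d + 1))) hcont h1 hlt hC₁ hα hε hlow
  obtain ⟨C, hC, hcap⟩ := exists_toSphere_closedBall_le volume finrank_euclideanSpace_fin
  set φ : ℝ → ℝ := fun u ↦ exp (-(c * u ^ α))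
  have hφ : AntitoneOn φ (Ici 0) := fun u hu v _ huv ↦ by simp only [φ]; gcongr
  have hsum := summable_exp_neg_mul_rpow_mul_pow hc hα d
  have hS : 0 < ∑' k : ℕ, φ k * ((k : ℝ) + 1) ^ d :=
    hsum.tsum_pos (fun k ↦ by positivity) 0 (by positivity)
  refine ⟨σ.real univ * C * ∑' k : ℕ, φ k * ((k : ℝ) + 1) ^ d,
    mul_pos (mul_pos measureReal_univ_pos hC) hS, fun N hN ↦ ?_⟩
  have hN₀ : (0 : ℝ) < N := by exact_mod_cast hN
  calc _ ≤ ∫⁻ p, ENNReal.ofReal (φ (dist p.1 p.2 / (N : ℝ) ^ (-1 / α))) ∂σ.prod σ := by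
        refine lintegral_mono fun p ↦ ENNReal.ofReal_le_ofReal ?_
        rw [Subtype.dist_eq, dist_eq_norm]
        exact (pow_le_pow_left₀ (abs_nonneg _)
          (hκ _ _ (norm_eq_of_mem_sphere p.1) (norm_eq_of_mem_sphere p.2)) N).trans_eq
          (exp_neg_mul_rpow_pow hα.ne' (norm_nonneg _) hN)
    _ ≤ _ := lintegral_prod_comp_dist_le σ hC.le hcap hφ (fun _ ↦ (exp_pos _).le) hsum
          (rpow_pos_of_pos hN₀ _)
    _ = _ := by
        rw [← rpow_natCast, ← rpow_mul hN₀.le]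
        ring_nf

/-- Upper bound on the moments of an isotropic covariance function on the `d`-sphere,
with respect to the (surface) volume measure on `S^d ⊂ ℝ^{d+1}`. -/
theorem sphere_covariance_moment_upper_bound
    {d : ℕ} (hd : 0 < d) (κ : ℝ → ℝ)
    (hcont : ContinuousOn κ (Set.Icc (-1 : ℝ) 1)) (h1 : κ 1 = 1)
    (hlt : ∀ t ∈ Set.Icc (-1 : ℝ) 1, t ≠ 1 → |κ t| < 1)
    (C₁ α ε : ℝ) (hC₁ : 0 < C₁) (hα : 0 < α) (hε : 0 < ε)
    (hlow : ∀ θ : ℝ, |θ| ≤ ε → C₁ * |θ| ^ α ≤ 1 - κ (Real.cos θ)) :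
    ∃ c : ℝ, 0 < c ∧ ∀ N : ℕ, 1 ≤ N →
      ∫⁻ p : (Metric.sphere (0 : EuclideanSpace ℝ (Fin (d + 1))) 1) ×
              (Metric.sphere (0 : EuclideanSpace ℝ (Fin (d + 1))) 1),
          ENNReal.ofReal
            (|κ (inner ℝ (p.1 : EuclideanSpace ℝ (Fin (d + 1)))
                (p.2 : EuclideanSpace ℝ (Fin (d + 1))))| ^ N)
        ∂((volume : Measure (EuclideanSpace ℝ (Fin (d + 1)))).toSphere.prod
            (volume : Measure (EuclideanSpace ℝ (Fin (d + 1)))).toSphere)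
      ≤ ENNReal.ofReal (c * (N : ℝ) ^ (-(d : ℝ) / α)) :=
  sphere_covariance_moment_upper_bound_general κ hcont h1 hlt C₁ α ε hC₁ hα hε hlow
end
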